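/- Let Y and C be binary random variables on a probability space, and suppose the counterfactual outcomes satisfy exogeneity P(Y = y | do(C = c)) = P(Y = y | C = c) and monotonicity: the event {Y_{do(C=c)} ≠ y and Y_{do(C=c̄)} = y} has probability zero. Then PNS := P(Y_{do(C=c)} = y | C = c̄, Y ≠ y)·P(C = c̄, Y ≠ y) + P(Y_{do(C=c̄)} ≠ y | C = c, Y = y)·P(C = c, Y = y) equals P(Y = y | do(C = c)) − P(Y = y | do(C = c̄)). -/
import Mathlib


open MeasureTheory ProbabilityTheory

/-- Pearl's identifiability theorem for PNS under exogeneity and monotonicity,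
in potential-outcomes form.  Here `C, Y : Ω → Bool` are binary random variables
(`c = true`, `c̄ = false`, `y = true`), and `Yc, Ycb` are the potential outcomes
`Y_{do(C=c)}` and `Y_{do(C=c̄)}`, jointly distributed with `(C, Y)`.
Products `P(A | B)·P(B)` are interpreted as joint probabilities `P(A ∩ B)`. -/
theorem pns_identifiability_under_monotonicity
    {Ω : Type*} [MeasurableSpace Ω] (μ : Measure Ω) [IsProbabilityMeasure μ]
    (C Y Yc Ycb : Ω → Bool)
    (hC : Measurable C) (hY : Measurable Y) (hYc : Measurable Yc) (hYcb : Measurable Ycb)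
    -- consistency: Y = Y_c on {C = c}, Y = Y_{c̄} on {C = c̄}
    (hcons_c : ∀ ω, C ω = true → Y ω = Yc ω)
    (hcons_cb : ∀ ω, C ω = false → Y ω = Ycb ω)
    -- exogeneity: P(Y = y | do(C = x)) = P(Y = y | C = x)
    (hexo_c : μ {ω | Yc ω = true} = μ[{ω | Y ω = true} | {ω | C ω = true}])
    (hexo_cb : μ {ω | Ycb ω = true} = μ[{ω | Y ω = true} | {ω | C ω = false}])
    -- monotonicity: P(Y_{do(C=c)} ≠ y, Y_{do(C=c̄)} = y) = 0
    (hmono : μ {ω | Yc ω = false ∧ Ycb ω = true} = 0) :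
    (μ {ω | Yc ω = true ∧ C ω = false ∧ Y ω = false}).toReal
      + (μ {ω | Ycb ω = false ∧ C ω = true ∧ Y ω = true}).toReal
      = (μ {ω | Yc ω = true}).toReal - (μ {ω | Ycb ω = true}).toReal := by
  -- measurable sets
  have mYc : MeasurableSet {ω | Yc ω = true} := hYc (measurableSet_singleton true)
  have mYcb : MeasurableSet {ω | Ycb ω = true} := hYcb (measurableSet_singleton true)
  have mC : MeasurableSet {ω | C ω = true} := hC (measurableSet_singleton true)
  -- rewrite the two LHS events using consistency
  have hA : {ω | Yc ω = true ∧ C ω = false ∧ Y ω = false}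
      = {ω | (Yc ω = true ∧ Ycb ω = false) ∧ C ω = false} := by
    ext ω
    simp only [Set.mem_setOf_eq]
    constructor
    · rintro ⟨h1, h2, h3⟩
      exact ⟨⟨h1, (hcons_cb ω h2) ▸ h3⟩, h2⟩
    · rintro ⟨⟨h1, h2⟩, h3⟩
      exact ⟨h1, h3, (hcons_cb ω h3).trans h2⟩
  have hB : {ω | Ycb ω = false ∧ C ω = true ∧ Y ω = true}
      = {ω | (Yc ω = true ∧ Ycb ω = false) ∧ C ω = true} := by
    ext ω
    simp only [Set.mem_setOf_eq]
    constructor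
    · rintro ⟨h1, h2, h3⟩
      exact ⟨⟨(hcons_c ω h2) ▸ h3, h1⟩, h2⟩
    · rintro ⟨⟨h1, h2⟩, h3⟩
      exact ⟨h2, h3, (hcons_c ω h3).trans h1⟩
  -- split {Yc=1 ∧ Ycb=0} by C
  have hsplit : μ {ω | (Yc ω = true ∧ Ycb ω = false) ∧ C ω = true}
      + μ {ω | (Yc ω = true ∧ Ycb ω = false) ∧ C ω = false}
      = μ {ω | Yc ω = true ∧ Ycb ω = false} := by
    have := measure_inter_add_diff (μ := μ)
      ({ω | Yc ω = true ∧ Ycb ω = false}) mC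
    have e1 : {ω | Yc ω = true ∧ Ycb ω = false} ∩ {ω | C ω = true}
        = {ω | (Yc ω = true ∧ Ycb ω = false) ∧ C ω = true} := rfl
    have e2 : {ω | Yc ω = true ∧ Ycb ω = false} \ {ω | C ω = true}
        = {ω | (Yc ω = true ∧ Ycb ω = false) ∧ C ω = false} := by
      ext ω
      simp [Set.mem_setOf_eq, Bool.not_eq_true]
    rw [e1, e2] at this
    exact this
  -- split {Yc=1} by Ycb
  have hYc_split : μ {ω | Yc ω = true ∧ Ycb ω = true}
      + μ {ω | Yc ω = true ∧ Ycb ω = false} = μ {ω | Yc ω = true} := by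
    have := measure_inter_add_diff (μ := μ) ({ω | Yc ω = true}) mYcb
    have e1 : {ω | Yc ω = true} ∩ {ω | Ycb ω = true}
        = {ω | Yc ω = true ∧ Ycb ω = true} := rfl
    have e2 : {ω | Yc ω = true} \ {ω | Ycb ω = true}
        = {ω | Yc ω = true ∧ Ycb ω = false} := by
      ext ω
      simp [Set.mem_setOf_eq, Bool.not_eq_true]
    rw [e1, e2] at this
    exact this
  -- split {Ycb=1} by Yc; the Yc=false part is null by monotonicity
  have hYcb_split : μ {ω | Ycb ω = true} = μ {ω | Yc ω = true ∧ Ycb ω = true} := by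
    have := measure_inter_add_diff (μ := μ) ({ω | Ycb ω = true}) mYc
    have e1 : {ω | Ycb ω = true} ∩ {ω | Yc ω = true}
        = {ω | Yc ω = true ∧ Ycb ω = true} := by
      ext ω; exact and_comm
    have e2 : {ω | Ycb ω = true} \ {ω | Yc ω = true}
        = {ω | Yc ω = false ∧ Ycb ω = true} := by
      ext ω
      simp only [Set.mem_diff, Set.mem_setOf_eq,
        Bool.not_eq_true]
      exact and_comm
    rw [e1, e2, hmono, add_zero] at this
    exact this.symm
  -- finiteness
  have fin : ∀ s : Set Ω, μ s ≠ ⊤ := fun s => measure_ne_top μ s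
  rw [hA, hB, hYc_split.symm, hYcb_split, ← hsplit]
  rw [ENNReal.toReal_add (fin _) (ENNReal.add_ne_top.2 ⟨fin _, fin _⟩),
    ENNReal.toReal_add (fin _) (fin _)]
  ring
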